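/- arXiv:2309.07492 — 3 statements merged into one kernel-verified Lean document; each statement's English description precedes it below -/
import Mathlib

section
/- Every generalized eigenvalue λ of the pair (A_h, M), i.e. every λ for which there exists ψ ≠ 0 with A_h ψ = λ M ψ, is real and satisfies 0 < λ h² < 12. -/
/-!
Both matrices are tridiagonal, and the whole argument is two factorizations by the lower
bidiagonal matrices `D±` with unit diagonal and `±1` below it:
`h² A_h = D₋ᵀ D₋` and `12 M - h² A_h = 3 D₊ᵀ D₊`. Since `D±` is invertible, both `h² A_h`
and `12 M - h² A_h` are positive definite, and a generalized eigenvalue `μ = λ h²` of the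
pair `(h² A_h, M)` is then the quotient `12 a / (a + d)` of two positive reals,
`a = ψ* (h² A_h) ψ` and `d = ψ* (12 M - h² A_h) ψ`.
-/

open Matrix

noncomputable def stiffAh (N : ℕ) (h : ℝ) : Matrix (Fin (N + 1)) (Fin (N + 1)) ℝ :=
  Matrix.of fun i j =>
    if i = j then (if (i : ℕ) = N then 1 / h ^ 2 else 2 / h ^ 2)
    else if (i : ℕ) + 1 = (j : ℕ) ∨ (j : ℕ) + 1 = (i : ℕ) then -(1 / h ^ 2) else 0

noncomputable def massM (N : ℕ) : Matrix (Fin (N + 1)) (Fin (N + 1)) ℝ :=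
  Matrix.of fun i j =>
    if i = j then (if (i : ℕ) = N then 2 / 6 else 4 / 6)
    else if (i : ℕ) + 1 = (j : ℕ) ∨ (j : ℕ) + 1 = (i : ℕ) then 1 / 6 else 0

theorem Fin.sum_ite_val_eq {M : Type*} [AddCommMonoid M] {N : ℕ} (m : ℕ)
    (f : Fin (N + 1) → M) :
    ∑ k : Fin (N + 1), (if (k : ℕ) = m then f k else 0) =
      if h : m < N + 1 then f ⟨m, h⟩ else 0 := by
  split_ifs with h
  · rw [Finset.sum_eq_single ⟨m, h⟩ (fun k _ hk => if_neg fun hkm => hk (Fin.ext hkm))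
      (fun hm => absurd (Finset.mem_univ _) hm), if_pos rfl]
  · exact Finset.sum_eq_zero fun k _ => if_neg fun hkm : (k : ℕ) = m => h (hkm ▸ k.isLt)

namespace Matrix

variable {R : Type*}

def tridiag [Zero R] (N : ℕ) (a b e : R) : Matrix (Fin (N + 1)) (Fin (N + 1)) R :=
  of fun i j =>
    if i = j then (if (i : ℕ) = N then b else a)
    else if (i : ℕ) + 1 = (j : ℕ) ∨ (j : ℕ) + 1 = (i : ℕ) then e else 0

def bidiag [Zero R] [One R] (N : ℕ) (s : R) : Matrix (Fin (N + 1)) (Fin (N + 1)) R :=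
  of fun i j => if i = j then 1 else if (j : ℕ) + 1 = (i : ℕ) then s else 0

theorem bidiag_transpose_mul_self [CommRing R] (N : ℕ) (s : R) :
    (bidiag N s)ᵀ * bidiag N s = tridiag N (1 + s ^ 2) 1 s := by
  ext i j
  have hsplit : ∀ k l : Fin (N + 1), bidiag N s k l =
      (if (k : ℕ) = l then 1 else 0) + if (k : ℕ) = l + 1 then s else 0 := by
    intro k l
    simp only [bidiag, of_apply, Fin.ext_iff]
    split_ifs <;> first | omega | simp
  simp only [mul_apply, transpose_apply, hsplit, add_mul, mul_add, ite_mul, mul_ite, zero_mul,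
    mul_zero, one_mul, mul_one, Finset.sum_add_distrib, Fin.sum_ite_val_eq, Fin.is_lt, dite_true,
    tridiag, of_apply, Fin.ext_iff]
  split_ifs <;> first | omega | ring

theorem tridiag_map {S : Type*} [Zero R] [Zero S] (N : ℕ) (a b e : R) (f : R → S)
    (hf : f 0 = 0) :
    (tridiag N a b e).map f = tridiag N (f a) (f b) (f e) := by
  ext i j
  simp only [tridiag, map_apply, of_apply]
  split_ifs <;> first | rfl | exact hf

theorem smul_tridiag {α : Type*} [Zero R] [SMulZeroClass α R] (N : ℕ) (r : α) (a b e : R) :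
    r • tridiag N a b e = tridiag N (r • a) (r • b) (r • e) := by
  ext i j
  simp only [tridiag, smul_apply, of_apply]
  split_ifs <;> simp

theorem tridiag_sub [SubtractionMonoid R] (N : ℕ) (a b e a' b' e' : R) :
    tridiag N a b e - tridiag N a' b' e' = tridiag N (a - a') (b - b') (e - e') := by
  ext i j
  simp only [tridiag, sub_apply, of_apply]
  split_ifs <;> simp

theorem det_bidiag [CommRing R] (N : ℕ) (s : R) : (bidiag N s).det = 1 := by
  rw [det_of_isLowerTriangular _ fun i j hij => ?_]
  · simp [bidiag]
  · have : (i : ℕ) < j := hij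
    simp only [bidiag, of_apply]
    split_ifs <;> first | omega | rfl

theorem posDef_tridiag [CommRing R] [StarRing R] [PartialOrder R] [StarOrderedRing R]
    [NoZeroDivisors R] (N : ℕ) {s : R} (hs : IsSelfAdjoint s) :
    (tridiag N (1 + s ^ 2) 1 s).PosDef := by
  have : (bidiag N s)ᴴ = (bidiag N s)ᵀ := by
    ext i j
    simp only [conjTranspose_apply, transpose_apply, bidiag, of_apply]
    split_ifs <;> simp [hs.star_eq]
  rw [← bidiag_transpose_mul_self, ← this]
  exact PosDef.conjTranspose_mul_self _ <|
    mulVec_injective_of_det_mem_nonZeroDivisors (det_bidiag N s ▸ one_mem _)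

open scoped ComplexOrder in
theorem eigenvalue_mem_Ioo_of_posDef {n : Type*} [Fintype n] {A M : Matrix n n ℂ} {c : ℝ}
    (hc : 0 < c) (hA : A.PosDef) (hMA : (c • M - A).PosDef) {μ : ℂ} {ψ : n → ℂ}
    (hψ : ψ ≠ 0) (hAψ : A *ᵥ ψ = μ • M *ᵥ ψ) :
    μ.im = 0 ∧ 0 < μ.re ∧ μ.re < c := by
  obtain ⟨a, ha, hAa⟩ := RCLike.pos_iff_exists_ofReal.mp (hA.dotProduct_mulVec_pos hψ)
  obtain ⟨d, hd, hMAd⟩ := RCLike.pos_iff_exists_ofReal.mp (hMA.dotProduct_mulVec_pos hψ)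
  simp only [sub_mulVec, smul_mulVec, dotProduct_sub, dotProduct_smul, Complex.real_smul]
    at hMAd
  have hq : star ψ ⬝ᵥ A *ᵥ ψ = μ * (star ψ ⬝ᵥ M *ᵥ ψ) := by
    rw [hAψ, dotProduct_smul, smul_eq_mul]
  have hμ : μ = ((c * a / (a + d) : ℝ) : ℂ) := by
    push_cast
    rw [eq_div_iff (by exact_mod_cast (add_pos ha hd).ne')]
    linear_combination (μ - c) * hAa + μ * hMAd - c * hq
  rw [hμ, Complex.ofReal_re, Complex.ofReal_im, div_lt_iff₀ (add_pos ha hd)]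
  exact ⟨rfl, by positivity, by nlinarith⟩

end Matrix

section FiniteElement

variable (N : ℕ) {h : ℝ}

theorem smul_map_stiffAh (hh : h ≠ 0) :
    h ^ 2 • (stiffAh N h).map (fun x => (x : ℂ)) = tridiag N (1 + (-1) ^ 2) 1 (-1) := by
  norm_num only
  rw [stiffAh, ← tridiag, tridiag_map _ _ _ _ _ Complex.ofReal_zero, smul_tridiag]
  have : (h : ℂ) ≠ 0 := Complex.ofReal_ne_zero.mpr hh
  congr 1 <;> (simp only [Complex.real_smul]; push_cast; field_simp)

theorem smul_map_massM_sub_smul_map_stiffAh (hh : h ≠ 0) :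
    (12 : ℝ) • (massM N).map (fun x => (x : ℂ)) -
        h ^ 2 • (stiffAh N h).map (fun x => (x : ℂ)) = (3 : ℝ) • tridiag N (1 + 1 ^ 2) 1 1 := by
  rw [smul_map_stiffAh N hh, massM, ← tridiag, tridiag_map _ _ _ _ _ Complex.ofReal_zero,
    smul_tridiag, smul_tridiag, tridiag_sub]
  congr 1 <;> (simp only [Complex.real_smul]; push_cast; norm_num)

open scoped ComplexOrder

theorem posDef_smul_map_stiffAh (hh : h ≠ 0) :
    (h ^ 2 • (stiffAh N h).map (fun x => (x : ℂ))).PosDef :=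
  smul_map_stiffAh N hh ▸ posDef_tridiag N (IsSelfAdjoint.one ℂ).neg

theorem posDef_smul_map_massM_sub_smul_map_stiffAh (hh : h ≠ 0) :
    ((12 : ℝ) • (massM N).map (fun x => (x : ℂ)) -
      h ^ 2 • (stiffAh N h).map (fun x => (x : ℂ))).PosDef :=
  smul_map_massM_sub_smul_map_stiffAh N hh ▸
    (posDef_tridiag N (IsSelfAdjoint.one ℂ)).smul (by norm_num : (0 : ℝ) < 3)

end FiniteElement

/-- Every generalized eigenvalue `λ` of the pair `(A_h, M)` (i.e. every `λ`
for which `A_h ψ = λ M ψ` has a nonzero solution `ψ`) is real and satisfies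
`0 < λ h² < 12`, where `h = L/(N+1)`. -/
theorem stmt_3 (N : ℕ) (L h : ℝ) (hL : 0 < L) (hh : h = L / (N + 1)) (lam : ℂ)
    (hev : ∃ ψ : Fin (N + 1) → ℂ, ψ ≠ 0 ∧
      ((stiffAh N h).map (fun x => (x : ℂ))) *ᵥ ψ =
        lam • (((massM N).map (fun x => (x : ℂ))) *ᵥ ψ)) :
    lam.im = 0 ∧ 0 < lam.re * h ^ 2 ∧ lam.re * h ^ 2 < 12 := by
  obtain ⟨ψ, hψ, hψeq⟩ := hev
  have hh0 : h ≠ 0 := by rw [hh]; positivity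
  have hh2 : 0 < h ^ 2 := by positivity
  obtain ⟨him, hre_pos, hre_lt⟩ := eigenvalue_mem_Ioo_of_posDef (μ := lam * (h ^ 2 : ℝ))
    (by norm_num) (posDef_smul_map_stiffAh N hh0)
    (posDef_smul_map_massM_sub_smul_map_stiffAh N hh0) hψ
    (by rw [smul_mulVec, hψeq, mul_smul, Complex.coe_smul, smul_comm])
  simp only [Complex.mul_im, Complex.mul_re, Complex.ofReal_re, Complex.ofReal_im, mul_zero,
    zero_add, sub_zero] at him hre_pos hre_lt
  exact ⟨(mul_eq_zero.mp him).resolve_right hh2.ne', hre_pos, hre_lt⟩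
end

section
/- Let λ_max(N) denote the largest generalized eigenvalue of the pair (A_h, M) (equivalently, the largest eigenvalue of M⁻¹A_h), where h = L/(N+1). Then λ_max(N)·h² < 12 for every N, and λ_max(N)·h² → 12 as N → ∞. -/
open Matrix

/-! Write `D = diag(2, …, 2, 1)` and `J` for the adjacency matrix of the path on `N + 1`
vertices, so that `h² A_h = D - J` and `12 M = (D - J) + 3 (D + J)`. For `s = ±1` the quadratic
form of `D + s J` is `ψ₀² + ∑ᵢ (ψᵢ + s ψᵢ₊₁)²`, so both matrices are positive definite, and
`12 M - h² A_h = 3 (D + J)` forces every generalized eigenvalue to satisfy `λ h² < 12`.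
Conversely, for `cos ((N + 1) θ) = 0` the vector `ψⱼ = sin ((j + 1) θ)` satisfies
`J ψ = cos θ • D ψ`, hence is a generalized eigenvector with `λ h² = 6 (1 - cos θ) / (2 + cos θ)`;
taking `θ = π - π / (2 (N + 1))`, this tends to `12`. -/

open Finset Real Filter Topology

theorem Matrix.lt_of_mulVec_eq_smul_mulVec {n : Type*} [Fintype n] {A B : Matrix n n ℝ}
    {c μ : ℝ} (hB : B.PosSemidef) (hAB : (c • B - A).PosDef) {ψ : n → ℝ} (hψ : ψ ≠ 0)
    (h : A *ᵥ ψ = μ • B *ᵥ ψ) : μ < c := by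
  have hpos := hAB.dotProduct_mulVec_pos hψ
  have hnonneg := hB.dotProduct_mulVec_nonneg ψ
  rw [star_trivial] at hpos hnonneg
  rw [sub_mulVec, smul_mulVec, h, dotProduct_sub, dotProduct_smul, dotProduct_smul,
    smul_eq_mul, smul_eq_mul, ← sub_mul] at hpos
  exact sub_pos.mp (pos_of_mul_pos_left hpos hnonneg)

def pathDiag (N : ℕ) : Matrix (Fin (N + 1)) (Fin (N + 1)) ℝ :=
  diagonal fun i => if (i : ℕ) = N then 1 else 2

def pathAdj (N : ℕ) : Matrix (Fin (N + 1)) (Fin (N + 1)) ℝ :=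
  of fun i j => if (i : ℕ) + 1 = j ∨ (j : ℕ) + 1 = i then 1 else 0

-- Vectors are handled as restrictions of sequences `g : ℕ → ℝ`, so that the neighbours of an
-- index are reached by plain `ℕ` arithmetic.
theorem pathAdj_mulVec_apply (N : ℕ) (g : ℕ → ℝ) (i : Fin (N + 1)) :
    (pathAdj N *ᵥ fun j => g j) i =
      (if 0 < (i : ℕ) then g (i - 1) else 0) + if (i : ℕ) < N then g (i + 1) else 0 := by
  have hsplit : ∀ j : ℕ, (if (i : ℕ) + 1 = j ∨ j + 1 = i then g j else 0) =
      (if 0 < (i : ℕ) then if j = i - 1 then g j else 0 else 0) +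
        if j = i + 1 then g j else 0 := by
    intro j; split_ifs <;> first | (exfalso; omega) | simp
  simp only [mulVec, dotProduct, pathAdj, of_apply, ite_mul, one_mul, zero_mul]
  rw [Fin.sum_univ_eq_sum_range (fun j => if (i : ℕ) + 1 = j ∨ j + 1 = (i : ℕ) then g j else 0),
    sum_congr rfl fun j _ => hsplit j, sum_add_distrib, sum_ite_eq']
  split_ifs <;> simp_all

theorem dotProduct_pathAdj_mulVec (N : ℕ) (g : ℕ → ℝ) :
    (fun i : Fin (N + 1) => g i) ⬝ᵥ (pathAdj N *ᵥ fun j => g j) =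
      2 * ∑ i ∈ range N, g i * g (i + 1) := by
  simp only [dotProduct, pathAdj_mulVec_apply, mul_add, sum_add_distrib]
  rw [Fin.sum_univ_eq_sum_range (fun i => g i * if 0 < i then g (i - 1) else 0),
    Fin.sum_univ_eq_sum_range (fun i => g i * if i < N then g (i + 1) else 0),
    sum_range_succ', sum_range_succ]
  simp [mul_comm, two_mul, sum_ite_of_true]

theorem dotProduct_pathDiag_mulVec (N : ℕ) (g : ℕ → ℝ) :
    (fun i : Fin (N + 1) => g i) ⬝ᵥ (pathDiag N *ᵥ fun j => g j) =
      2 * ∑ i ∈ range N, g i ^ 2 + g N ^ 2 := by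
  have hinterior : ∀ i ∈ range N, g i * ((if i = N then 1 else 2) * g i) = 2 * g i ^ 2 :=
    fun i hi => by rw [if_neg (mem_range.mp hi).ne]; ring
  simp only [dotProduct, pathDiag, mulVec_diagonal]
  rw [Fin.sum_univ_eq_sum_range (fun i => g i * ((if i = N then 1 else 2) * g i)),
    sum_range_succ, sum_congr rfl hinterior, if_pos rfl, mul_sum]
  ring

theorem dotProduct_pathDiag_add_smul_pathAdj_mulVec (N : ℕ) {s : ℝ} (hs : s ^ 2 = 1)
    (g : ℕ → ℝ) :
    (fun i : Fin (N + 1) => g i) ⬝ᵥ ((pathDiag N + s • pathAdj N) *ᵥ fun j => g j) =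
      g 0 ^ 2 + ∑ i ∈ range N, (g i + s * g (i + 1)) ^ 2 := by
  have hsq : ∀ i ∈ range N,
      (g i + s * g (i + 1)) ^ 2 = g i ^ 2 + g (i + 1) ^ 2 + 2 * s * (g i * g (i + 1)) :=
    fun i _ => by linear_combination g (i + 1) ^ 2 * hs
  have hshift := (sum_range_succ (fun i => g i ^ 2) N).symm.trans
    (sum_range_succ' (fun i => g i ^ 2) N)
  rw [add_mulVec, smul_mulVec, dotProduct_add, dotProduct_smul, smul_eq_mul,
    dotProduct_pathDiag_mulVec, dotProduct_pathAdj_mulVec, sum_congr rfl hsq,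
    sum_add_distrib, sum_add_distrib, ← mul_sum]
  linarith

theorem posDef_pathDiag_add_smul_pathAdj (N : ℕ) {s : ℝ} (hs : s ^ 2 = 1) :
    (pathDiag N + s • pathAdj N).PosDef := by
  refine .of_dotProduct_mulVec_pos ?_ fun x hx => ?_
  · ext i j
    simp only [conjTranspose_apply, star_trivial, Matrix.add_apply, Matrix.smul_apply,
      pathDiag, pathAdj, diagonal, of_apply]
    split_ifs <;> simp_all [eq_comm, or_comm]
  set g : ℕ → ℝ := fun k => if hk : k < N + 1 then x ⟨k, hk⟩ else 0
  have hxg : x = fun j : Fin (N + 1) => g j := funext fun j => by simp only [g, dif_pos j.isLt]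
  rw [star_trivial, hxg, dotProduct_pathDiag_add_smul_pathAdj_mulVec N hs]
  by_contra! hle
  have hS := sum_nonneg fun i (_ : i ∈ range N) => sq_nonneg (g i + s * g (i + 1))
  have hg0 : g 0 = 0 := by nlinarith [sq_nonneg (g 0)]
  have hS0 : ∑ i ∈ range N, (g i + s * g (i + 1)) ^ 2 = 0 := by nlinarith [sq_nonneg (g 0)]
  have hstep : ∀ i ∈ range N, g i + s * g (i + 1) = 0 := fun i hi =>
    pow_eq_zero_iff two_ne_zero |>.mp <|
      (sum_eq_zero_iff_of_nonneg fun k _ => sq_nonneg (g k + s * g (k + 1))).mp hS0 i hi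
  have hs0 : s ≠ 0 := by rintro rfl; norm_num at hs
  have hzero : ∀ k ≤ N, g k = 0 := by
    intro k
    induction k with
    | zero => exact fun _ => hg0
    | succ k ih =>
      intro hk
      have := hstep k (mem_range.mpr hk)
      rw [ih (Nat.le_of_succ_le hk), zero_add, mul_eq_zero] at this
      exact this.resolve_left hs0
  exact hx (hxg.trans (funext fun j => hzero j (Nat.lt_succ_iff.mp j.isLt)))

theorem stiffAh_eq (N : ℕ) (h : ℝ) :
    stiffAh N h = (h ^ 2)⁻¹ • (pathDiag N - pathAdj N) := by
  ext i j
  simp only [stiffAh, pathDiag, pathAdj, diagonal, of_apply, Matrix.smul_apply,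
    Matrix.sub_apply, smul_eq_mul]
  split_ifs <;> simp_all [div_eq_inv_mul]

theorem massM_eq (N : ℕ) :
    massM N = (12 : ℝ)⁻¹ • (pathDiag N - pathAdj N + (3 : ℝ) • (pathDiag N + pathAdj N)) := by
  ext i j
  simp only [massM, pathDiag, pathAdj, diagonal, of_apply, Matrix.smul_apply,
    Matrix.sub_apply, Matrix.add_apply, smul_eq_mul]
  split_ifs <;> simp_all <;> norm_num

theorem mul_sq_lt_twelve_of_stiffAh_mulVec_eq (N : ℕ) {h lam : ℝ} (hh : h ≠ 0)
    {ψ : Fin (N + 1) → ℝ} (hψ : ψ ≠ 0) (heq : stiffAh N h *ᵥ ψ = lam • massM N *ᵥ ψ) :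
    lam * h ^ 2 < 12 := by
  have hsub : (pathDiag N - pathAdj N).PosDef := by
    simpa [sub_eq_add_neg] using posDef_pathDiag_add_smul_pathAdj N (s := -1) (by norm_num)
  have hadd : (pathDiag N + pathAdj N).PosDef := by
    simpa using posDef_pathDiag_add_smul_pathAdj N (s := 1) (by norm_num)
  have hM : (massM N).PosSemidef := by
    rw [massM_eq]
    exact ((hsub.add (hadd.smul three_pos)).smul (by norm_num : (0 : ℝ) < 12⁻¹)).posSemidef
  have hgap :
      (12 : ℝ) • massM N - (pathDiag N - pathAdj N) = (3 : ℝ) • (pathDiag N + pathAdj N) := by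
    rw [massM_eq]
    module
  refine Matrix.lt_of_mulVec_eq_smul_mulVec hM (hgap ▸ hadd.smul three_pos) hψ ?_
  rw [stiffAh_eq, smul_mulVec] at heq
  calc (pathDiag N - pathAdj N) *ᵥ ψ
        = h ^ 2 • (h ^ 2)⁻¹ • (pathDiag N - pathAdj N) *ᵥ ψ := by
        rw [smul_smul, mul_inv_cancel₀ (pow_ne_zero 2 hh), one_smul]
    _ = (lam * h ^ 2) • massM N *ᵥ ψ := by rw [heq, smul_smul, mul_comm]

noncomputable def discreteEigenvalue (θ : ℝ) : ℝ := 6 * (1 - cos θ) / (2 + cos θ)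

noncomputable def sinVec (N : ℕ) (θ : ℝ) : Fin (N + 1) → ℝ := fun j => sin ((j + 1) * θ)

theorem pathAdj_mulVec_sinVec (N : ℕ) {θ : ℝ} (hθ : cos ((N + 1) * θ) = 0) :
    pathAdj N *ᵥ sinVec N θ = cos θ • (pathDiag N *ᵥ sinVec N θ) := by
  funext i
  have hleft : (if 0 < (i : ℕ) then sin ((((i - 1 : ℕ) : ℝ) + 1) * θ) else 0) = sin (i * θ) := by
    rcases Nat.eq_zero_or_pos i with hi | hi
    · simp [hi]
    · rw [if_pos hi, Nat.cast_sub hi, Nat.cast_one, sub_add_cancel]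
  have hsin_sub : sin (i * θ) = sin ((i + 1) * θ) * cos θ - cos ((i + 1) * θ) * sin θ := by
    rw [← sin_sub]; ring_nf
  rw [show sinVec N θ = fun j : Fin (N + 1) => (fun k : ℕ => sin ((k + 1) * θ)) j from rfl,
    pathAdj_mulVec_apply N (fun k => sin ((k + 1) * θ)), hleft, Pi.smul_apply,
    pathDiag, mulVec_diagonal, smul_eq_mul]
  rcases (Nat.lt_succ_iff.mp i.isLt).lt_or_eq with hi | hi
  · rw [if_pos hi, if_neg hi.ne, hsin_sub]
    have hsin_add : sin ((((i + 1 : ℕ) : ℝ) + 1) * θ) =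
        sin ((i + 1) * θ) * cos θ + cos ((i + 1) * θ) * sin θ := by
      rw [← sin_add]; push_cast; ring_nf
    rw [hsin_add]; ring
  · rw [if_neg hi.not_lt, if_pos hi, hsin_sub, hi, hθ]; ring

theorem stiffAh_mulVec_sinVec (N : ℕ) {h θ : ℝ} (hh : h ≠ 0) (hθ : cos ((N + 1) * θ) = 0) :
    stiffAh N h *ᵥ sinVec N θ =
      (discreteEigenvalue θ / h ^ 2) • (massM N *ᵥ sinVec N θ) := by
  have hc : 2 + cos θ ≠ 0 := by linarith [neg_one_le_cos θ]
  rw [stiffAh_eq, massM_eq, discreteEigenvalue]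
  simp only [smul_mulVec, add_mulVec, sub_mulVec, pathAdj_mulVec_sinVec N hθ]
  match_scalars
  field_simp
  ring

theorem sinVec_ne_zero (N : ℕ) {θ : ℝ} (h0 : 0 < θ) (hπ : θ < π) : sinVec N θ ≠ 0 := by
  intro h
  have := congrFun h 0
  simp only [sinVec, Fin.val_zero, Nat.cast_zero, zero_add, one_mul, Pi.zero_apply] at this
  exact (sin_pos_of_pos_of_lt_pi h0 hπ).ne' this

noncomputable def maxAngle (N : ℕ) : ℝ := π - π / (2 * (N + 1))

theorem cos_succ_mul_maxAngle (N : ℕ) : cos ((N + 1) * maxAngle N) = 0 := by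
  have : ((N : ℝ) + 1) * maxAngle N = ((N + 1 : ℕ) : ℝ) * π - π / 2 := by
    rw [maxAngle]; push_cast; field_simp
  rw [this, cos_nat_mul_pi_sub, cos_pi_div_two, mul_zero]

theorem maxAngle_pos (N : ℕ) : 0 < maxAngle N := by
  rw [maxAngle, sub_pos]
  exact div_lt_self pi_pos (by linarith [(N.cast_nonneg : (0 : ℝ) ≤ N)])

theorem maxAngle_lt_pi (N : ℕ) : maxAngle N < π :=
  sub_lt_self π (by positivity)

theorem tendsto_maxAngle : Tendsto maxAngle atTop (𝓝 π) := by
  have h : Tendsto (fun N : ℕ => π / (2 * ((N : ℝ) + 1))) atTop (𝓝 0) :=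
    tendsto_const_nhds.div_atTop <|
      (tendsto_natCast_atTop_atTop.atTop_add tendsto_const_nhds).const_mul_atTop two_pos
  rw [← sub_zero π]
  exact tendsto_const_nhds.sub h

theorem tendsto_discreteEigenvalue_maxAngle :
    Tendsto (fun N => discreteEigenvalue (maxAngle N)) atTop (𝓝 12) := by
  have hcont : ContinuousAt discreteEigenvalue π :=
    (by fun_prop : Continuous fun θ => 6 * (1 - cos θ)).continuousAt.div
      (by fun_prop : Continuous fun θ => 2 + cos θ).continuousAt (by norm_num)
  have h12 : discreteEigenvalue π = 12 := by norm_num [discreteEigenvalue]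
  exact h12 ▸ hcont.tendsto.comp tendsto_maxAngle

/-- If `λ_max(N)` denotes the largest generalized eigenvalue of the pair
`(A_h, M)` with `h = L/(N+1)`, then `λ_max(N)·h² < 12` for every `N`, and
`λ_max(N)·h² → 12` as `N → ∞`. -/
theorem stmt_4 (L : ℝ) (hL : 0 < L) (lamMax : ℕ → ℝ)
    (hmax : ∀ N : ℕ, IsGreatest
      {lam : ℝ | ∃ ψ : Fin (N + 1) → ℝ, ψ ≠ 0 ∧
        (stiffAh N (L / (N + 1))) *ᵥ ψ = lam • ((massM N) *ᵥ ψ)} (lamMax N)) :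
    (∀ N : ℕ, lamMax N * (L / (N + 1)) ^ 2 < 12) ∧
    Filter.Tendsto (fun N : ℕ => lamMax N * (L / (N + 1)) ^ 2)
      Filter.atTop (nhds 12) := by
  have hh (N : ℕ) : L / (N + 1) ≠ 0 := by positivity
  have hupper (N : ℕ) : lamMax N * (L / (N + 1)) ^ 2 < 12 := by
    obtain ⟨ψ, hψ, heq⟩ := (hmax N).1
    exact mul_sq_lt_twelve_of_stiffAh_mulVec_eq N (hh N) hψ heq
  have hlower (N : ℕ) : discreteEigenvalue (maxAngle N) ≤ lamMax N * (L / (N + 1)) ^ 2 := by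
    have := (hmax N).2 ⟨sinVec N (maxAngle N),
      sinVec_ne_zero N (maxAngle_pos N) (maxAngle_lt_pi N),
      stiffAh_mulVec_sinVec N (hh N) (cos_succ_mul_maxAngle N)⟩
    rwa [div_le_iff₀ (by positivity)] at this
  exact ⟨hupper, tendsto_of_tendsto_of_tendsto_of_le_of_le tendsto_discreteEigenvalue_maxAngle
    tendsto_const_nhds hlower fun N => (hupper N).le⟩
end

section
/- For any grid functions U, V, W : {0, 1, …, N+1} → ℝ, the triple-product summation-by-parts identity h·Σ_{j=0}^{N} [δ_x U_{j+1/2} · V_{j+1/2} · W_{j+1/2} + U_{j+1/2} · δ_x V_{j+1/2} · W_{j+1/2} + U_{j+1/2} · V_{j+1/2} · δ_x W_{j+1/2}] + U₀V₀W₀ = U_{N+1}V_{N+1}W_{N+1} − (1/4)·Σ_{j=0}^{N} (U_{j+1} − U_j)(V_{j+1} − V_j)(W_{j+1} − W_j) holds. -/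
/-! On each cell, the discrete product rule for the midpoint averages gives the jump of `U V W`
across the cell up to the cubic correction `−¼ ΔU ΔV ΔW`; summed over the cells, the jumps
telescope to `U_{N+1} V_{N+1} W_{N+1} − U₀ V₀ W₀`. -/

open Finset

theorem mul_diffQuot_midpoint_triple_eq {K : Type*} [Field K] [NeZero (2 : K)] {h : K}
    (hh : h ≠ 0) (a₀ a₁ b₀ b₁ c₀ c₁ : K) :
    h * ((a₁ - a₀) / h * ((b₀ + b₁) / 2) * ((c₀ + c₁) / 2)
        + ((a₀ + a₁) / 2) * ((b₁ - b₀) / h) * ((c₀ + c₁) / 2)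
        + ((a₀ + a₁) / 2) * ((b₀ + b₁) / 2) * ((c₁ - c₀) / h))
      = a₁ * b₁ * c₁ - a₀ * b₀ * c₀ - 1 / 4 * ((a₁ - a₀) * (b₁ - b₀) * (c₁ - c₀)) := by
  have h4 : (4 : K) = 2 * 2 := by norm_num
  rw [h4]
  field_simp
  ring

/-- Triple-product summation-by-parts identity for grid functions
`U, V, W` on `{0, …, N+1}`, with midpoint averages `U_{j+1/2} = (U_j + U_{j+1})/2` and
difference quotients `δ_x U_{j+1/2} = (U_{j+1} − U_j)/h`. -/
theorem stmt_7 (N : ℕ) (h : ℝ) (hh : 0 < h) (U V W : ℕ → ℝ) :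
    h * ∑ j ∈ Finset.range (N + 1),
        (((U (j + 1) - U j) / h) * ((V j + V (j + 1)) / 2) * ((W j + W (j + 1)) / 2)
          + ((U j + U (j + 1)) / 2) * ((V (j + 1) - V j) / h) * ((W j + W (j + 1)) / 2)
          + ((U j + U (j + 1)) / 2) * ((V j + V (j + 1)) / 2) * ((W (j + 1) - W j) / h))
      + U 0 * V 0 * W 0
      = U (N + 1) * V (N + 1) * W (N + 1)
        - 1 / 4 * ∑ j ∈ Finset.range (N + 1),
            (U (j + 1) - U j) * (V (j + 1) - V j) * (W (j + 1) - W j) := by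
  rw [mul_sum]
  simp only [mul_diffQuot_midpoint_triple_eq hh.ne']
  rw [sum_sub_distrib, sum_range_sub (fun j => U j * V j * W j), ← mul_sum]
  ring
end
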